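/- Let K ⊆ ℝ^n be a nonempty closed convex set, d : ℝ^n → ℝ a differentiable m-strongly convex function (m > 0), and b > a > 0 constants. Then for every η ∈ ℝ^n: (i) φ^{ab}(λ, η) ≥ 0 for all λ ∈ ℝ^n; and (ii) φ^{ab}(λ, η) = 0 if and only if λ ∈ SOL(K, η), i.e. λ ∈ K and ⟨ω − λ, η⟩ ≥ 0 for all ω ∈ K. -/

import Mathlib

/-!
`L^c(λ, η, ω) = ⟨η, λ - ω⟩ - c·D(λ, ω)` with the Bregman divergence
`D(λ, ω) = d ω - d λ - ⟨∇d λ, ω - λ⟩ ≥ (m/2)‖ω - λ‖²`, so `L^a - L^b ≥ (b - a)(m/2)‖ω - λ‖²`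
pointwise and `φ^a ≥ φ^b`. If `φ^a = φ^b`, every maximising sequence of `L^b(λ, η, ·)` on `K`
converges to `λ`; hence `λ ∈ K` and `φ^b = L^b(λ, η, λ) = 0`. Then `λ` maximises `L^a(λ, η, ·)`
on the convex set `K`, whose derivative at `λ` is `-⟨η, ·⟩`, and Fermat's rule on the tangent
cone is exactly the variational inequality. Conversely, at a solution every `L^c(λ, η, ω)` is
`≤ 0`, with equality at `ω = λ`.
-/

open scoped RealInnerProductSpace

/-- Auchmuty's function `L^c(λ, η, ω) = c·d(λ) − c·d(ω) + ⟨η − c·∇d(λ), λ − ω⟩`. -/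
noncomputable def Auchmuty {n : ℕ} (c : ℝ) (d : EuclideanSpace ℝ (Fin n) → ℝ)
    (lam eta om : EuclideanSpace ℝ (Fin n)) : ℝ :=
  c * d lam - c * d om + ⟪eta - c • gradient d lam, lam - om⟫

/-- The generalized primal gap function `φ^c(λ, η) = sup_{ω ∈ K} L^c(λ, η, ω)`. -/
noncomputable def primalGap {n : ℕ} (K : Set (EuclideanSpace ℝ (Fin n))) (c : ℝ)
    (d : EuclideanSpace ℝ (Fin n) → ℝ) (lam eta : EuclideanSpace ℝ (Fin n)) : ℝ :=
  sSup (Auchmuty c d lam eta '' K)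

/-- The generalized D-gap function `φ^{ab}(λ, η) = φ^a(λ, η) − φ^b(λ, η)`. -/
noncomputable def Dgap {n : ℕ} (K : Set (EuclideanSpace ℝ (Fin n))) (a b : ℝ)
    (d : EuclideanSpace ℝ (Fin n) → ℝ) (lam eta : EuclideanSpace ℝ (Fin n)) : ℝ :=
  primalGap K a d lam eta - primalGap K b d lam eta

open Filter Set
open scoped Topology

noncomputable def bregmanDiv {E : Type*} [NormedAddCommGroup E] [InnerProductSpace ℝ E]
    [CompleteSpace E] (d : E → ℝ) (x y : E) : ℝ :=
  d y - d x - ⟪gradient d x, y - x⟫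

section
variable {n : ℕ} {K : Set (EuclideanSpace ℝ (Fin n))} {d : EuclideanSpace ℝ (Fin n) → ℝ}
  {m a b c : ℝ} {lam eta om : EuclideanSpace ℝ (Fin n)}

theorem auchmuty_eq_inner_sub_bregmanDiv :
    Auchmuty c d lam eta om = ⟪eta, lam - om⟫ - c * bregmanDiv d lam om := by
  simp only [Auchmuty, bregmanDiv, inner_sub_left, inner_sub_right, real_inner_smul_left]
  ring

@[simp]
theorem auchmuty_self : Auchmuty c d lam eta lam = 0 := by
  simp [Auchmuty]

theorem continuous_auchmuty (hd : Continuous d) : Continuous (Auchmuty c d lam eta) := by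
  unfold Auchmuty
  fun_prop

theorem hasFDerivAt_auchmuty (hd : DifferentiableAt ℝ d lam) :
    HasFDerivAt (Auchmuty c d lam eta) (-innerSL ℝ eta) lam := by
  set w := eta - c • gradient d lam
  have hL := ((hd.hasGradientAt.hasFDerivAt.const_mul c).const_sub (c * d lam)).add
    ((innerSL ℝ w).hasFDerivAt.const_sub ⟪w, lam⟫)
  refine (hL.congr_fderiv ?_).congr_of_eventuallyEq (Eventually.of_forall fun om => ?_)
  · ext v
    simp only [toDual_gradient, map_sub, map_smul, neg_sub, add_apply, neg_apply, smul_apply,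
      smul_eq_mul, sub_apply, coe_innerSL_apply, inner_gradient_left, w]
    ring
  · simp [Auchmuty, w, inner_sub_left, inner_sub_right, real_inner_smul_left]

theorem auchmuty_le (hstrong : ∀ x y, m / 2 * ‖y - x‖ ^ 2 ≤ bregmanDiv d x y) (hc : 0 < c)
    (hm : 0 < m) : Auchmuty c d lam eta om ≤ ‖eta‖ ^ 2 / (2 * c * m) := by
  have hcs : ⟪eta, lam - om⟫ ≤ ‖eta‖ * ‖om - lam‖ := by
    rw [norm_sub_rev]
    exact real_inner_le_norm _ _
  have hB := mul_le_mul_of_nonneg_left (hstrong lam om) hc.le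
  rw [auchmuty_eq_inner_sub_bregmanDiv, le_div_iff₀ (by positivity)]
  nlinarith [sq_nonneg (c * m * ‖om - lam‖ - ‖eta‖), mul_pos hc hm]

theorem bddAbove_image_auchmuty (hstrong : ∀ x y, m / 2 * ‖y - x‖ ^ 2 ≤ bregmanDiv d x y)
    (hc : 0 < c) (hm : 0 < m) : BddAbove (Auchmuty c d lam eta '' K) :=
  ⟨_, forall_mem_image.2 fun _ _ => auchmuty_le hstrong hc hm⟩

theorem auchmuty_le_primalGap (hbdd : BddAbove (Auchmuty c d lam eta '' K)) (hom : om ∈ K) :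
    Auchmuty c d lam eta om ≤ primalGap K c d lam eta :=
  le_csSup hbdd (mem_image_of_mem _ hom)

theorem auchmuty_add_le_auchmuty (hstrong : ∀ x y, m / 2 * ‖y - x‖ ^ 2 ≤ bregmanDiv d x y)
    (hab : a ≤ b) :
    Auchmuty b d lam eta om + (b - a) * (m / 2 * ‖om - lam‖ ^ 2) ≤ Auchmuty a d lam eta om := by
  rw [auchmuty_eq_inner_sub_bregmanDiv, auchmuty_eq_inner_sub_bregmanDiv]
  nlinarith [mul_le_mul_of_nonneg_left (hstrong lam om) (sub_nonneg.2 hab)]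

theorem primalGap_le_primalGap_of_le (hstrong : ∀ x y, m / 2 * ‖y - x‖ ^ 2 ≤ bregmanDiv d x y)
    (hm : 0 < m) (ha : 0 < a) (hab : a ≤ b) (hK : K.Nonempty) :
    primalGap K b d lam eta ≤ primalGap K a d lam eta := by
  refine csSup_le (hK.image _) (forall_mem_image.2 fun om hom => ?_)
  have hLa : Auchmuty a d lam eta om ≤ primalGap K a d lam eta :=
    auchmuty_le_primalGap (bddAbove_image_auchmuty hstrong ha hm) hom
  have hLb := auchmuty_add_le_auchmuty hstrong hab (lam := lam) (eta := eta) (om := om)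
  have hba := sub_nonneg.2 hab
  have : 0 ≤ (b - a) * (m / 2 * ‖om - lam‖ ^ 2) := by positivity
  linarith

theorem primalGap_eq_zero_of_mem_sol (hconv : ∀ x y, 0 ≤ bregmanDiv d x y) (hc : 0 ≤ c)
    (hlam : lam ∈ K) (hsol : ∀ om ∈ K, 0 ≤ ⟪om - lam, eta⟫) : primalGap K c d lam eta = 0 := by
  have hle : ∀ y ∈ Auchmuty c d lam eta '' K, y ≤ 0 := by
    rintro _ ⟨om, hom, rfl⟩
    rw [auchmuty_eq_inner_sub_bregmanDiv, ← neg_sub om lam, inner_neg_right, real_inner_comm]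
    nlinarith [hsol om hom, mul_nonneg hc (hconv lam om)]
  exact le_antisymm (csSup_le ⟨0, lam, hlam, auchmuty_self⟩ hle)
    (le_csSup ⟨0, hle⟩ ⟨lam, hlam, auchmuty_self⟩)

theorem exists_seq_tendsto_of_primalGap_eq
    (hstrong : ∀ x y, m / 2 * ‖y - x‖ ^ 2 ≤ bregmanDiv d x y) (hm : 0 < m) (ha : 0 < a)
    (hab : a < b) (hK : K.Nonempty) (heq : primalGap K a d lam eta = primalGap K b d lam eta) :
    ∃ u : ℕ → EuclideanSpace ℝ (Fin n), (∀ k, u k ∈ K) ∧ Tendsto u atTop (𝓝 lam) ∧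
      Tendsto (fun k => Auchmuty b d lam eta (u k)) atTop (𝓝 (primalGap K b d lam eta)) := by
  obtain ⟨v, -, hv, hvK⟩ := exists_seq_tendsto_sSup (hK.image (Auchmuty b d lam eta))
    (bddAbove_image_auchmuty hstrong (ha.trans hab) hm)
  change Tendsto v atTop (𝓝 (primalGap K b d lam eta)) at hv
  choose u huK hu using hvK
  refine ⟨u, huK, ?_, by simpa only [hu] using hv⟩
  have hC : 0 < (b - a) * (m / 2) := by have := sub_pos.2 hab; positivity
  have hgap : Tendsto (fun k => (primalGap K b d lam eta - v k) / ((b - a) * (m / 2))) atTop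
      (𝓝 0) := by
    simpa using (hv.const_sub (primalGap K b d lam eta)).div_const ((b - a) * (m / 2))
  have hsq : Tendsto (fun k => ‖u k - lam‖ ^ 2) atTop (𝓝 0) := by
    refine squeeze_zero (fun k => by positivity) (fun k => ?_) hgap
    rw [le_div_iff₀ hC]
    have hLa : Auchmuty a d lam eta (u k) ≤ primalGap K a d lam eta :=
      auchmuty_le_primalGap (bddAbove_image_auchmuty hstrong ha hm) (huK k)
    have hLb := auchmuty_add_le_auchmuty hstrong hab.le (lam := lam) (eta := eta) (om := u k)
    rw [hu k] at hLb
    linarith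
  rw [tendsto_iff_norm_sub_tendsto_zero]
  simpa using hsq.sqrt

theorem mem_and_primalGap_eq_zero_of_primalGap_eq (hKclosed : IsClosed K) (hd : Continuous d)
    (hstrong : ∀ x y, m / 2 * ‖y - x‖ ^ 2 ≤ bregmanDiv d x y) (hm : 0 < m) (ha : 0 < a)
    (hab : a < b) (hK : K.Nonempty) (heq : primalGap K a d lam eta = primalGap K b d lam eta) :
    lam ∈ K ∧ primalGap K b d lam eta = 0 := by
  obtain ⟨u, huK, hu, hval⟩ := exists_seq_tendsto_of_primalGap_eq hstrong hm ha hab hK heq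
  refine ⟨hKclosed.mem_of_tendsto hu (Eventually.of_forall huK), tendsto_nhds_unique hval ?_⟩
  have hlim := ((continuous_auchmuty hd (c := b) (lam := lam) (eta := eta)).tendsto lam).comp hu
  rwa [auchmuty_self] at hlim

theorem inner_nonneg_of_primalGap_eq_zero (hKconvex : Convex ℝ K) (hlam : lam ∈ K)
    (hd : DifferentiableAt ℝ d lam) (hbdd : BddAbove (Auchmuty c d lam eta '' K))
    (h0 : primalGap K c d lam eta = 0) (hom : om ∈ K) : 0 ≤ ⟪om - lam, eta⟫ := by
  have hmax : IsLocalMaxOn (Auchmuty c d lam eta) K lam := IsMaxOn.localize fun x hx => by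
    simpa [h0] using auchmuty_le_primalGap hbdd hx
  have := hmax.hasFDerivWithinAt_nonpos (hasFDerivAt_auchmuty hd).hasFDerivWithinAt
    (sub_mem_posTangentConeAt_of_segment_subset (hKconvex.segment_subset hlam hom))
  simpa [real_inner_comm] using this

end

theorem stmt3_general {n : ℕ} (K : Set (EuclideanSpace ℝ (Fin n)))
    (hK : K.Nonempty) (hKclosed : IsClosed K) (hKconvex : Convex ℝ K)
    (d : EuclideanSpace ℝ (Fin n) → ℝ) (m : ℝ) (hm : 0 < m)
    (hddiff : Differentiable ℝ d)
    (hstrong : ∀ x y : EuclideanSpace ℝ (Fin n),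
      d x + ⟪gradient d x, y - x⟫ + m / 2 * ‖y - x‖ ^ 2 ≤ d y)
    (a b : ℝ) (ha : 0 < a) (hab : a < b) (eta : EuclideanSpace ℝ (Fin n)) :
    (∀ lam : EuclideanSpace ℝ (Fin n), 0 ≤ Dgap K a b d lam eta) ∧
    (∀ lam : EuclideanSpace ℝ (Fin n),
      (Dgap K a b d lam eta = 0 ↔ lam ∈ K ∧ ∀ om ∈ K, 0 ≤ ⟪om - lam, eta⟫)) := by
  have hB : ∀ x y, m / 2 * ‖y - x‖ ^ 2 ≤ bregmanDiv d x y := fun x y => by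
    unfold bregmanDiv
    linarith [hstrong x y]
  have hconv : ∀ x y, 0 ≤ bregmanDiv d x y := fun x y =>
    (by positivity : 0 ≤ m / 2 * ‖y - x‖ ^ 2).trans (hB x y)
  refine ⟨fun lam => sub_nonneg.2 (primalGap_le_primalGap_of_le hB hm ha hab.le hK),
    fun lam => ⟨fun h0 => ?_, fun ⟨hlam, hsol⟩ => ?_⟩⟩
  · have heq : primalGap K a d lam eta = primalGap K b d lam eta := sub_eq_zero.1 h0
    obtain ⟨hlam, hb0⟩ :=
      mem_and_primalGap_eq_zero_of_primalGap_eq hKclosed hddiff.continuous hB hm ha hab hK heq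
    exact ⟨hlam, fun om => inner_nonneg_of_primalGap_eq_zero hKconvex hlam (hddiff lam)
      (bddAbove_image_auchmuty hB ha hm) (heq.trans hb0)⟩
  · rw [Dgap, primalGap_eq_zero_of_mem_sol hconv ha.le hlam hsol,
      primalGap_eq_zero_of_mem_sol hconv (ha.trans hab).le hlam hsol, sub_zero]

/-- nonnegativity of the generalized D-gap function on all of `ℝ^n`, and
`φ^{ab}(λ, η) = 0` iff `λ ∈ SOL(K, η)`. -/
theorem stmt3 {n : ℕ} (hn : 0 < n) (K : Set (EuclideanSpace ℝ (Fin n)))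
    (hK : K.Nonempty) (hKclosed : IsClosed K) (hKconvex : Convex ℝ K)
    (d : EuclideanSpace ℝ (Fin n) → ℝ) (m : ℝ) (hm : 0 < m)
    (hddiff : Differentiable ℝ d)
    (hstrong : ∀ x y : EuclideanSpace ℝ (Fin n),
      d x + ⟪gradient d x, y - x⟫ + m / 2 * ‖y - x‖ ^ 2 ≤ d y)
    (a b : ℝ) (ha : 0 < a) (hab : a < b) (eta : EuclideanSpace ℝ (Fin n)) :
    (∀ lam : EuclideanSpace ℝ (Fin n), 0 ≤ Dgap K a b d lam eta) ∧
    (∀ lam : EuclideanSpace ℝ (Fin n),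
      (Dgap K a b d lam eta = 0 ↔ lam ∈ K ∧ ∀ om ∈ K, 0 ≤ ⟪om - lam, eta⟫)) :=
  stmt3_general K hK hKclosed hKconvex d m hm hddiff hstrong a b ha hab eta
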